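/- arXiv:1310.7313 — 2 statements merged into one kernel-verified Lean document; each statement's English description precedes it below -/
import Mathlib

section
/- Let G be a connected bipartite graph on n vertices. Then ρ_s(G) ≤ √(⌊n/2⌋·⌈n/2⌉), with equality if and only if G is the complete bipartite graph K_{⌊n/2⌋, ⌈n/2⌉}. -/
open Polynomial Matrix

variable {V : Type*} [Fintype V] [DecidableEq V]

/-- `S` is a skew-adjacency matrix of the simple graph `G`. -/
def IsSkewAdj (G : SimpleGraph V) (S : Matrix V V ℝ) : Prop :=
  (∀ i j, S j i = - S i j) ∧
  (∀ i j, G.Adj i j → S i j = 1 ∨ S i j = -1) ∧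
  (∀ i j, ¬ G.Adj i j → S i j = 0)

/-- Spectral radius of a complex square matrix. -/
noncomputable def specRad (M : Matrix V V ℂ) : ℝ :=
  sSup {r : ℝ | ∃ z : ℂ, M.charpoly.IsRoot z ∧ r = ‖z‖}

/-- The number of matchings of `G` covering exactly `k` vertices. -/
noncomputable def matchCount (G : SimpleGraph V) (k : ℕ) : ℕ :=
  {M : G.Subgraph | M.IsMatching ∧ M.verts.ncard = k}.ncard

/-- The matching polynomial of `G`, as a polynomial over `ℂ`. -/
noncomputable def matchingPoly (G : SimpleGraph V) : Polynomial ℂ :=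
  ∑ k ∈ Finset.range (Fintype.card V + 1),
    Polynomial.C ((-1 : ℂ) ^ (k / 2) * (matchCount G k : ℂ)) *
      Polynomial.X ^ (Fintype.card V - k)

/-- The maximum skew spectral radius of `G`. -/
noncomputable def maxSkewSpecRad (G : SimpleGraph V) : ℝ :=
  sSup {r : ℝ | ∃ S : Matrix V V ℝ, IsSkewAdj G S ∧ r = specRad (S.map Complex.ofReal)}

/-- `G` contains an even cycle. -/
def HasEvenCycle (G : SimpleGraph V) : Prop :=
  ∃ (v : V) (w : G.Walk v v), w.IsCycle ∧ Even w.length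

/-!
If `S` is skew-symmetric then `vᵀ S v = 0`, so an eigenvector `v` of `S` for a nonzero
eigenvalue `z` is isotropic: `∑ vᵢ² = 0`. For such `v` and any real row `r`, Cauchy–Schwarz
gives `2 |r ⬝ v|² ≤ ‖r‖² ‖v‖²`; summing over the rows of a skew-adjacency matrix yields
`|z|² ≤ ‖S‖²_F / 2 = |E(G)|`. A bipartite graph with parts of sizes `p + q = n` has at most
`p q ≤ ⌊n/2⌋ ⌈n/2⌉` edges, and equality throughout forces `G ≅ K_{⌊n/2⌋,⌈n/2⌉}`.
Conversely, orienting every edge of `K_{a,b}` from the first part to the second gives a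
skew-adjacency matrix with eigenvalue `i √(a b)`.
-/

open Finset Fintype

namespace Matrix

lemma isRoot_charpoly_iff_exists_mulVec_eq_smul {ι : Type*} [Fintype ι] [DecidableEq ι]
    {M : Matrix ι ι ℂ} {z : ℂ} : M.charpoly.IsRoot z ↔ ∃ v ≠ 0, M *ᵥ v = z • v := by
  rw [← charpoly_toLin', ← Module.End.hasEigenvalue_iff_isRoot_charpoly]
  constructor
  · intro hz
    obtain ⟨v, hv⟩ := hz.exists_hasEigenvector
    exact ⟨v, hv.2, by simpa using hv.apply_eq_smul⟩
  · rintro ⟨v, hv0, hv⟩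
    exact Module.End.hasEigenvalue_of_hasEigenvector
      ⟨Module.End.mem_eigenspace_iff.2 (by simpa using hv), hv0⟩

lemma dotProduct_self_eq_zero_of_mulVec_eq_smul {ι : Type*} [Fintype ι] {M : Matrix ι ι ℂ}
    (hM : Mᵀ = -M) {z : ℂ} (hz : z ≠ 0) {v : ι → ℂ} (hv : M *ᵥ v = z • v) : v ⬝ᵥ v = 0 := by
  have hform : v ⬝ᵥ (M *ᵥ v) = 0 := by
    have h : v ⬝ᵥ (M *ᵥ v) = -(v ⬝ᵥ (M *ᵥ v)) := by
      conv_lhs => rw [dotProduct_mulVec, ← mulVec_transpose, hM, neg_mulVec, neg_dotProduct,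
        dotProduct_comm]
    linear_combination h / 2
  rw [hv, dotProduct_smul, smul_eq_mul] at hform
  exact (mul_eq_zero.mp hform).resolve_left hz

end Matrix

lemma two_mul_norm_sq_sum_le_of_dotProduct_self_eq_zero {ι : Type*} [Fintype ι] (r : ι → ℝ)
    {v : ι → ℂ} (hv : v ⬝ᵥ v = 0) :
    2 * ‖∑ i, (r i : ℂ) * v i‖ ^ 2 ≤ (∑ i, r i ^ 2) * ∑ i, ‖v i‖ ^ 2 := by
  set w := ∑ i, (r i : ℂ) * v i
  -- Cauchy–Schwarz for `r` and the real vector `x = 2 Re (conj w • v)`, where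
  -- `r ⬝ x = 2 ‖w‖²` and, by isotropy of `v`, `‖x‖² = 2 ‖w‖² ‖v‖²`.
  set x : ι → ℝ := fun i => 2 * (starRingEnd ℂ w * v i).re
  have hrx : ∑ i, r i * x i = 2 * ‖w‖ ^ 2 := by
    have : ∑ i, r i * x i = 2 * (starRingEnd ℂ w * w).re := by
      simp only [x, w, Finset.mul_sum, Complex.re_sum]
      refine Finset.sum_congr rfl fun i _ => ?_
      simp [Complex.mul_re]
      ring
    rw [this, Complex.conj_mul', ← Complex.ofReal_pow, Complex.ofReal_re]
  have hxx : ∑ i, x i ^ 2 = 2 * ‖w‖ ^ 2 * ∑ i, ‖v i‖ ^ 2 := by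
    have hre : ∑ i, (starRingEnd ℂ w ^ 2 * v i ^ 2).re = 0 := by
      have hv' : ∑ i, v i ^ 2 = 0 := by simpa only [dotProduct, ← sq] using hv
      rw [← Complex.re_sum, ← Finset.mul_sum, hv', mul_zero, Complex.zero_re]
    have hpt : ∀ y : ℂ, (2 * y.re) ^ 2 = 2 * (y ^ 2).re + 2 * ‖y‖ ^ 2 := fun y => by
      rw [Complex.sq_norm, Complex.normSq_apply, sq y, Complex.mul_re]
      ring
    simp only [x, hpt, norm_mul, Complex.norm_conj, mul_pow]
    rw [Finset.sum_add_distrib, ← Finset.mul_sum, ← Finset.mul_sum, ← Finset.mul_sum, hre]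
    ring
  have hcs := Finset.sum_mul_sq_le_sq_mul_sq Finset.univ r x
  rw [hrx, hxx] at hcs
  rcases (sq_nonneg ‖w‖).eq_or_lt with h0 | hpos
  · rw [← h0, mul_zero]
    positivity
  · nlinarith

lemma Nat.add_div_two_mul_add_one_div_two_eq {r s : ℕ} (h : r ≤ s) :
    (r + s) / 2 * ((r + s + 1) / 2) = r * s + (s - r) / 2 * ((s - r + 1) / 2) := by
  obtain ⟨d, rfl⟩ := Nat.exists_eq_add_of_le h
  rw [show r + d - r = d by omega, show (r + (r + d)) / 2 = r + d / 2 by omega,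
    show (r + (r + d) + 1) / 2 = r + (d + 1) / 2 by omega]
  have hd : d / 2 + (d + 1) / 2 = d := by omega
  calc (r + d / 2) * (r + (d + 1) / 2)
      = r * (r + (d / 2 + (d + 1) / 2)) + d / 2 * ((d + 1) / 2) := by ring
    _ = r * (r + d) + d / 2 * ((d + 1) / 2) := by rw [hd]

lemma Nat.mul_le_div_two_mul_add_one_div_two {r s n : ℕ} (h : r + s = n) :
    r * s ≤ n / 2 * ((n + 1) / 2) := by
  subst h
  rcases le_total r s with hrs | hsr
  · exact (Nat.add_div_two_mul_add_one_div_two_eq hrs).symm ▸ Nat.le_add_right _ _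
  · rw [mul_comm, add_comm r]
    exact (Nat.add_div_two_mul_add_one_div_two_eq hsr).symm ▸ Nat.le_add_right _ _

lemma Nat.le_add_one_of_div_two_mul_add_one_div_two_le {r s n : ℕ} (hrs : r ≤ s)
    (h : r + s = n) (he : n / 2 * ((n + 1) / 2) ≤ r * s) : s ≤ r + 1 := by
  subst h
  have hsplit := Nat.add_div_two_mul_add_one_div_two_eq hrs
  have h0 : (s - r) / 2 * ((s - r + 1) / 2) = 0 := Nat.eq_zero_of_le_zero (by linarith)
  rcases Nat.mul_eq_zero.mp h0 with h0 | h0 <;> omega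

lemma specRad_nonneg (M : Matrix V V ℂ) : 0 ≤ specRad M :=
  Real.sSup_nonneg (by rintro _ ⟨z, -, rfl⟩; exact norm_nonneg z)

lemma specRad_le {M : Matrix V V ℂ} {b : ℝ} (hb : 0 ≤ b)
    (h : ∀ z, M.charpoly.IsRoot z → ‖z‖ ≤ b) : specRad M ≤ b :=
  Real.sSup_le (by rintro _ ⟨z, hz, rfl⟩; exact h z hz) hb

lemma norm_le_specRad {M : Matrix V V ℂ} {z : ℂ} (hz : M.charpoly.IsRoot z) :
    ‖z‖ ≤ specRad M := by
  have hfin : {r : ℝ | ∃ z : ℂ, M.charpoly.IsRoot z ∧ r = ‖z‖}.Finite := by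
    convert (Polynomial.finite_setOfPred_isRoot M.charpoly_monic.ne_zero).image (‖·‖) using 1
    ext
    simp [eq_comm]
  exact le_csSup hfin.bddAbove ⟨z, hz, rfl⟩

lemma specRad_submatrix_equiv {W : Type*} [Fintype W] [DecidableEq W] (M : Matrix W W ℂ)
    (e : V ≃ W) : specRad (M.submatrix e e) = specRad M := by
  have := charpoly_reindex e.symm M
  simp only [reindex_apply, Equiv.symm_symm] at this
  simp only [specRad, this]

section IsSkewAdj

variable {W : Type*} {G : SimpleGraph W} {S : Matrix W W ℝ}

lemma IsSkewAdj.sq_apply [DecidableRel G.Adj] (hS : IsSkewAdj G S) (i j : W) :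
    S i j ^ 2 = if G.Adj i j then 1 else 0 := by
  by_cases h : G.Adj i j
  · rcases hS.2.1 i j h with h' | h' <;> simp [h, h']
  · simp [h, hS.2.2 i j h]

lemma IsSkewAdj.sum_sq_apply_eq_degree [Fintype W] [DecidableRel G.Adj] (hS : IsSkewAdj G S)
    (i : W) : ∑ j, S i j ^ 2 = G.degree i := by
  simp [hS.sq_apply, ← SimpleGraph.card_neighborFinset_eq_degree,
    SimpleGraph.neighborFinset_eq_filter]

lemma IsSkewAdj.transpose_map_ofReal (hS : IsSkewAdj G S) :
    (S.map Complex.ofReal)ᵀ = -S.map Complex.ofReal := by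
  ext i j
  simp [hS.1 j i]

lemma IsSkewAdj.norm_sq_le_card_edgeFinset [Fintype W] [DecidableEq W] [DecidableRel G.Adj]
    (hS : IsSkewAdj G S) {z : ℂ} (hz : (S.map Complex.ofReal).charpoly.IsRoot z) :
    ‖z‖ ^ 2 ≤ #G.edgeFinset := by
  obtain ⟨v, hv0, hv⟩ := isRoot_charpoly_iff_exists_mulVec_eq_smul.1 hz
  rcases eq_or_ne z 0 with rfl | hz0
  · simp
  have hvv := dotProduct_self_eq_zero_of_mulVec_eq_smul hS.transpose_map_ofReal hz0 hv
  set N := ∑ i, ‖v i‖ ^ 2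
  have hN : 0 < N := by
    obtain ⟨i, hi⟩ := Function.ne_iff.1 hv0
    exact Finset.sum_pos' (fun i _ => by positivity) ⟨i, Finset.mem_univ i, by positivity⟩
  have key : 2 * (‖z‖ ^ 2 * N) ≤ 2 * (#G.edgeFinset * N) :=
    calc 2 * (‖z‖ ^ 2 * N) = ∑ i, 2 * ‖(S.map Complex.ofReal *ᵥ v) i‖ ^ 2 := by
          simp [hv, N, mul_pow, Finset.mul_sum]
      _ ≤ ∑ i, (∑ j, S i j ^ 2) * N :=
          Finset.sum_le_sum fun i _ => two_mul_norm_sq_sum_le_of_dotProduct_self_eq_zero (S i) hvv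
      _ = 2 * (#G.edgeFinset * N) := by
          simp_rw [hS.sum_sq_apply_eq_degree, ← Finset.sum_mul, ← Nat.cast_sum,
            G.sum_degrees_eq_twice_card_edges]
          push_cast
          ring
  exact le_of_mul_le_mul_right (by linarith) hN

lemma IsSkewAdj.submatrix {U : Type*} {H : SimpleGraph U} {T : Matrix U U ℝ}
    (hT : IsSkewAdj H T) (e : G ≃g H) : IsSkewAdj G (T.submatrix e e) :=
  ⟨fun i j => hT.1 (e i) (e j), fun i j h => hT.2.1 (e i) (e j) (e.map_adj_iff.2 h),
    fun i j h => hT.2.2 (e i) (e j) (mt e.map_adj_iff.1 h)⟩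

lemma finite_setOf_isSkewAdj [Finite W] (G : SimpleGraph W) :
    {S : Matrix W W ℝ | IsSkewAdj G S}.Finite := by
  refine (Set.Finite.pi' fun _ => Set.Finite.pi' fun _ =>
    (Set.toFinite ({-1, 0, 1} : Set ℝ))).subset fun S hS i j => ?_
  by_cases h : G.Adj i j
  · rcases hS.2.1 i j h with h' | h' <;> simp [h']
  · simp [hS.2.2 i j h]

end IsSkewAdj

lemma maxSkewSpecRad_nonneg (G : SimpleGraph V) : 0 ≤ maxSkewSpecRad G :=
  Real.sSup_nonneg (by rintro _ ⟨S, -, rfl⟩; exact specRad_nonneg _)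

lemma maxSkewSpecRad_le {G : SimpleGraph V} {b : ℝ} (hb : 0 ≤ b)
    (h : ∀ S, IsSkewAdj G S → specRad (S.map Complex.ofReal) ≤ b) : maxSkewSpecRad G ≤ b :=
  Real.sSup_le (by rintro _ ⟨S, hS, rfl⟩; exact h S hS) hb

lemma IsSkewAdj.specRad_le_maxSkewSpecRad {G : SimpleGraph V} {S : Matrix V V ℝ}
    (hS : IsSkewAdj G S) : specRad (S.map Complex.ofReal) ≤ maxSkewSpecRad G := by
  refine le_csSup (((finite_setOf_isSkewAdj G).image
    fun S : Matrix V V ℝ => specRad (S.map Complex.ofReal)).bddAbove.mono ?_) ⟨S, hS, rfl⟩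
  rintro _ ⟨S, hS, rfl⟩
  exact ⟨S, hS, rfl⟩

lemma maxSkewSpecRad_le_sqrt_card_edgeFinset (G : SimpleGraph V) [DecidableRel G.Adj] :
    maxSkewSpecRad G ≤ √(#G.edgeFinset : ℝ) :=
  maxSkewSpecRad_le (Real.sqrt_nonneg _) fun _ hS => specRad_le (Real.sqrt_nonneg _)
    fun _ hz => Real.le_sqrt_of_sq_le (hS.norm_sq_le_card_edgeFinset hz)

lemma maxSkewSpecRad_le_of_iso {W : Type*} [Fintype W] [DecidableEq W] {G : SimpleGraph V}
    {H : SimpleGraph W} (e : G ≃g H) : maxSkewSpecRad H ≤ maxSkewSpecRad G :=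
  maxSkewSpecRad_le (maxSkewSpecRad_nonneg G) fun S hS =>
    calc specRad (S.map Complex.ofReal)
        = specRad ((S.map Complex.ofReal).submatrix e e) :=
          (specRad_submatrix_equiv _ e.toEquiv).symm
      _ = specRad ((S.submatrix e e).map Complex.ofReal) := by rw [submatrix_map]
      _ ≤ maxSkewSpecRad G := (hS.submatrix e).specRad_le_maxSkewSpecRad

def completeBipartiteSkewAdj (α β : Type*) : Matrix (α ⊕ β) (α ⊕ β) ℝ :=
  fromBlocks 0 (of fun _ _ => 1) (of fun _ _ => -1) 0

lemma isSkewAdj_completeBipartiteSkewAdj (α β : Type*) :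
    IsSkewAdj (completeBipartiteGraph α β) (completeBipartiteSkewAdj α β) := by
  refine ⟨?_, ?_, ?_⟩ <;> rintro (i | i) (j | j) <;> simp [completeBipartiteSkewAdj]

noncomputable def completeBipartiteSkewEigenvector (α β : Type*) [Fintype α] [Fintype β] :
    α ⊕ β → ℂ :=
  Sum.elim (fun _ => (√(card β : ℝ) : ℂ)) (fun _ => Complex.I * √(card α : ℝ))

lemma completeBipartiteSkewAdj_mulVec (α β : Type*) [Fintype α] [Fintype β] :
    (completeBipartiteSkewAdj α β).map Complex.ofReal *ᵥ completeBipartiteSkewEigenvector α β =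
      (Complex.I * √((card α : ℝ) * card β)) • completeBipartiteSkewEigenvector α β := by
  have ha : (√(card α : ℝ) : ℂ) ^ 2 = card α := by
    rw [← Complex.ofReal_pow, Real.sq_sqrt (Nat.cast_nonneg _)]
    simp
  have hb : (√(card β : ℝ) : ℂ) ^ 2 = card β := by
    rw [← Complex.ofReal_pow, Real.sq_sqrt (Nat.cast_nonneg _)]
    simp
  ext (i | i)
  · simp [completeBipartiteSkewAdj, completeBipartiteSkewEigenvector, mulVec, dotProduct,
      Real.sqrt_mul (Nat.cast_nonneg _)]
    linear_combination -(Complex.I * √(card α : ℝ)) * hb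
  · simp [completeBipartiteSkewAdj, completeBipartiteSkewEigenvector, mulVec, dotProduct,
      Real.sqrt_mul (Nat.cast_nonneg _)]
    linear_combination (√(card β : ℝ) : ℂ) * ha -
      (√(card α : ℝ) : ℂ) ^ 2 * √(card β : ℝ) * Complex.I_sq

lemma sqrt_card_mul_card_le_maxSkewSpecRad (α β : Type*) [Fintype α] [Fintype β] [DecidableEq α]
    [DecidableEq β] : √((card α : ℝ) * card β) ≤ maxSkewSpecRad (completeBipartiteGraph α β) := by
  rcases isEmpty_or_nonempty α with hα | ⟨⟨a⟩⟩
  · simp [maxSkewSpecRad_nonneg]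
  rcases isEmpty_or_nonempty β with hβ | hβ
  · simp [maxSkewSpecRad_nonneg]
  have hv0 : completeBipartiteSkewEigenvector α β ≠ 0 :=
    Function.ne_iff.2 ⟨Sum.inl a, by simp [completeBipartiteSkewEigenvector]⟩
  have hz := isRoot_charpoly_iff_exists_mulVec_eq_smul.2
    ⟨_, hv0, completeBipartiteSkewAdj_mulVec α β⟩
  calc √((card α : ℝ) * card β) = ‖Complex.I * √((card α : ℝ) * card β)‖ := by
        rw [norm_mul, Complex.norm_I, one_mul, Complex.norm_real,
          Real.norm_of_nonneg (Real.sqrt_nonneg _)]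
    _ ≤ _ := norm_le_specRad hz
    _ ≤ _ := (isSkewAdj_completeBipartiteSkewAdj α β).specRad_le_maxSkewSpecRad

namespace SimpleGraph

variable {W : Type*} [Fintype W] {H : SimpleGraph W}

lemma Colorable.exists_isBipartiteWith_compl [DecidableEq W] (h : H.Colorable 2) :
    ∃ s : Finset W, H.IsBipartiteWith s (sᶜ : Finset W) := by
  obtain ⟨c⟩ := h
  refine ⟨univ.filter (c · = 0), ⟨Finset.disjoint_coe.2 disjoint_compl_right, fun v w hvw => ?_⟩⟩
  simpa using (by decide : ∀ x y : Fin 2, x ≠ y → x = 0 ∧ y ≠ 0 ∨ x ≠ 0 ∧ y = 0) _ _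
    (c.valid hvw)

lemma nonempty_iso_completeBipartiteGraph_of_adj_iff [DecidableEq W] {s : Finset W}
    (hadj : ∀ v w, H.Adj v w ↔ (v ∈ s ↔ w ∉ s)) {a b : ℕ} (ha : #s = a) (hb : #sᶜ = b) :
    Nonempty (H ≃g completeBipartiteGraph (Fin a) (Fin b)) := by
  let e : completeBipartiteGraph {v // v ∈ s} {v // v ∉ s} ≃g H :=
    ⟨Equiv.sumCompl (· ∈ s), by rintro (v | v) (w | w) <;> simp [hadj, v.2, w.2]⟩
  exact ⟨e.symm.trans (completeBipartiteGraphCongr (Fintype.equivFinOfCardEq (by simpa using ha))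
    (Fintype.equivFinOfCardEq (by simp [Fintype.card_subtype_compl, ← hb, card_compl])))⟩

variable [DecidableRel H.Adj] {s t : Finset W}

lemma IsBipartiteWith.card_edgeFinset_le_card_mul_card (h : H.IsBipartiteWith s t) :
    #H.edgeFinset ≤ #s * #t := by
  rw [← isBipartiteWith_sum_degrees_eq_card_edges h, ← smul_eq_mul, ← Finset.sum_const]
  exact Finset.sum_le_sum fun v hv => isBipartiteWith_degree_le h hv

lemma IsBipartiteWith.adj_of_card_edgeFinset_eq (h : H.IsBipartiteWith s t)
    (he : #H.edgeFinset = #s * #t) {v w : W} (hv : v ∈ s) (hw : w ∈ t) : H.Adj v w := by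
  rw [← isBipartiteWith_sum_degrees_eq_card_edges h, ← smul_eq_mul, ← Finset.sum_const] at he
  have hdeg : H.degree v = #t :=
    (Finset.sum_eq_sum_iff_of_le fun u hu => isBipartiteWith_degree_le h hu).1 he v hv
  have hnbr : H.neighborFinset v = t :=
    Finset.eq_of_subset_of_card_le (isBipartiteWith_neighborFinset_subset h hv)
      (by rw [card_neighborFinset_eq_degree, hdeg])
  rwa [← mem_neighborFinset, hnbr]

lemma IsBipartiteWith.card_edgeFinset_le [DecidableEq W]
    (h : H.IsBipartiteWith s (sᶜ : Finset W)) :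
    #H.edgeFinset ≤ card W / 2 * ((card W + 1) / 2) :=
  h.card_edgeFinset_le_card_mul_card.trans
    (Nat.mul_le_div_two_mul_add_one_div_two (card_add_card_compl s))

lemma IsBipartiteWith.nonempty_iso_of_le_card_edgeFinset [DecidableEq W]
    (h : H.IsBipartiteWith s (sᶜ : Finset W))
    (he : card W / 2 * ((card W + 1) / 2) ≤ #H.edgeFinset) :
    Nonempty (H ≃g completeBipartiteGraph (Fin (card W / 2)) (Fin ((card W + 1) / 2))) := by
  have hcard := card_add_card_compl s
  have heq : #H.edgeFinset = #s * #sᶜ := le_antisymm h.card_edgeFinset_le_card_mul_card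
    ((Nat.mul_le_div_two_mul_add_one_div_two hcard).trans he)
  have hadj : ∀ v w, H.Adj v w ↔ (v ∈ s ↔ w ∉ s) := fun v w => by
    refine ⟨fun hvw => ?_, fun hvw => ?_⟩
    · rcases h.mem_of_adj hvw with ⟨hv, hw⟩ | ⟨hv, hw⟩ <;> simp_all
    · by_cases hv : v ∈ s
      · exact h.adj_of_card_edgeFinset_eq heq hv (by simpa using hvw.1 hv)
      · exact (h.adj_of_card_edgeFinset_eq heq (by tauto) (by simpa using hv)).symm
  rcases le_total #s #sᶜ with hs | hs
  · have := Nat.le_add_one_of_div_two_mul_add_one_div_two_le hs hcard (he.trans heq.le)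
    exact nonempty_iso_completeBipartiteGraph_of_adj_iff hadj (by omega) (by omega)
  · have := Nat.le_add_one_of_div_two_mul_add_one_div_two_le hs ((add_comm _ _).trans hcard)
      (by rw [mul_comm #sᶜ]; exact he.trans heq.le)
    refine nonempty_iso_completeBipartiteGraph_of_adj_iff (s := sᶜ) (fun v w => ?_) (by omega)
      (by rw [compl_compl]; omega)
    simp only [hadj, mem_compl]
    tauto

end SimpleGraph

theorem maxSkewSpecRad_le_of_connected_bipartite_general {n : ℕ}
    (G : SimpleGraph (Fin n)) (hbip : G.Colorable 2) :
    maxSkewSpecRad G ≤ Real.sqrt ((n / 2 : ℕ) * ((n + 1) / 2 : ℕ)) ∧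
    (maxSkewSpecRad G = Real.sqrt ((n / 2 : ℕ) * ((n + 1) / 2 : ℕ)) ↔
      Nonempty (G ≃g completeBipartiteGraph (Fin (n / 2)) (Fin ((n + 1) / 2)))) := by
  classical
  obtain ⟨s, hs⟩ := hbip.exists_isBipartiteWith_compl
  have hspec := maxSkewSpecRad_le_sqrt_card_edgeFinset G
  have hedges : #G.edgeFinset ≤ n / 2 * ((n + 1) / 2) := by
    simpa using hs.card_edgeFinset_le
  have hle : maxSkewSpecRad G ≤ √((n / 2 : ℕ) * ((n + 1) / 2 : ℕ)) :=
    hspec.trans (Real.sqrt_le_sqrt (by exact_mod_cast hedges))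
  refine ⟨hle, fun heq => ?_, fun ⟨φ⟩ => le_antisymm hle ?_⟩
  · rw [heq, Real.sqrt_le_sqrt_iff (Nat.cast_nonneg _)] at hspec
    have hiso := hs.nonempty_iso_of_le_card_edgeFinset
      (by rw [Fintype.card_fin]; exact_mod_cast hspec)
    rwa [Fintype.card_fin] at hiso
  · simpa using (sqrt_card_mul_card_le_maxSkewSpecRad _ _).trans (maxSkewSpecRad_le_of_iso φ)

/-- For a connected bipartite graph `G` on `n` vertices,
`ρ_s(G) ≤ √(⌊n/2⌋⌈n/2⌉)`, with equality iff `G` is `K_{⌊n/2⌋,⌈n/2⌉}`. -/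
theorem maxSkewSpecRad_le_of_connected_bipartite {n : ℕ}
    (G : SimpleGraph (Fin n)) (hconn : G.Connected) (hbip : G.Colorable 2) :
    maxSkewSpecRad G ≤ Real.sqrt ((n / 2 : ℕ) * ((n + 1) / 2 : ℕ)) ∧
    (maxSkewSpecRad G = Real.sqrt ((n / 2 : ℕ) * ((n + 1) / 2 : ℕ)) ↔
      Nonempty (G ≃g completeBipartiteGraph (Fin (n / 2)) (Fin ((n + 1) / 2)))) :=
  maxSkewSpecRad_le_of_connected_bipartite_general G hbip
end

section
/- If T is a tree, then every skew-adjacency matrix S of T (for any orientation) is similar via a {−1,1}-diagonal matrix conjugation combined with multiplication by i to a Hermitian matrix with the same spectral radius as the adjacency matrix of T; in particular, ρ(S) = ρ(A(T)) for every orientation of T, where A(T) is the adjacency matrix of T. -/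
/-!
Root `T` at `r` and let `U v` be the product of the entries `i S_ab` along the path from `r`
to `v`. Each entry `i S_ab = ±i` on an edge is inverted by `i S_ba`, so `U v = U u · i S_uv`
for every edge and `diag U · (i S) = A(T) · diag U`. Hence `i S` and `A(T)` have the same
characteristic polynomial, and multiplying by `i` does not change moduli of eigenvalues.
Since `i S` is already Hermitian, the diagonal `D` can be taken to be `1`.
-/

open Polynomial Matrix

variable {V : Type*} [Fintype V] [DecidableEq V]

open Complex

namespace SimpleGraph

variable {α M : Type*} {G : SimpleGraph α}

namespace Walk

def dartProd [Monoid M] (w : α → α → M) {u v : α} (p : G.Walk u v) : M :=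
  (p.darts.map fun d => w d.fst d.snd).prod

variable [Monoid M] (w : α → α → M)

lemma dartProd_concat {u v x : α} (p : G.Walk u v) (h : G.Adj v x) :
    (p.concat h).dartProd w = p.dartProd w * w v x := by
  simp [dartProd, darts_concat]

lemma isUnit_dartProd (hw : ∀ a b, G.Adj a b → w a b * w b a = 1) {u v : α}
    (p : G.Walk u v) : IsUnit (p.dartProd w) :=
  List.prod_isUnit <| by
    simp only [List.mem_map]
    rintro _ ⟨d, -, rfl⟩
    exact ⟨⟨_, _, hw _ _ d.adj, hw _ _ d.adj.symm⟩, rfl⟩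

end Walk

lemma IsAcyclic.eq_concat_or_eq_concat (hG : G.IsAcyclic) {r u v : α} {p : G.Walk r u}
    {q : G.Walk r v} (hp : p.IsPath) (hq : q.IsPath) (h : G.Adj u v) :
    q = p.concat h ∨ p = q.concat h.symm := by
  by_cases hu : u ∈ q.support
  · exact .inl (hG.path_concat hp hq h hu)
  · exact .inr (hG.path_concat hq hp h.symm
      (hG.mem_support_of_ne_mem_support_of_adj_of_isPath hp hq h hu))

theorem IsTree.exists_potential [Monoid M] (hG : G.IsTree) (w : α → α → M)
    (hw : ∀ u v, G.Adj u v → w u v * w v u = 1) :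
    ∃ U : α → M, (∀ v, IsUnit (U v)) ∧ ∀ u v, G.Adj u v → U v = U u * w u v := by
  obtain ⟨r⟩ := hG.connected.nonempty
  choose P hP using fun v => (hG.existsUnique_path r v).exists
  refine ⟨fun v => (P v).dartProd w, fun v => Walk.isUnit_dartProd w hw (P v), fun u v h => ?_⟩
  dsimp only
  rcases hG.isAcyclic.eq_concat_or_eq_concat (hP u) (hP v) h with hv | hu
  · rw [hv, Walk.dartProd_concat]
  · rw [hu, Walk.dartProd_concat, mul_assoc, hw v u h.symm, mul_one]

end SimpleGraph

lemma specRad_eq_sSup_norm_spectrum (M : Matrix V V ℂ) :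
    specRad M = sSup (norm '' spectrum ℂ M) := by
  simp only [specRad, mem_spectrum_iff_isRoot_charpoly, Set.image, eq_comm]

lemma specRad_smul_of_norm_eq_one {c : ℂ} (hc : ‖c‖ = 1) (M : Matrix V V ℂ) :
    specRad (c • M) = specRad M := by
  have hc0 : c ≠ 0 := norm_ne_zero_iff.1 (by rw [hc]; exact one_ne_zero)
  have hσ := spectrum.unit_smul_eq_smul M (Units.mk0 c hc0)
  simp only [Units.smul_def, Units.val_mk0] at hσ
  rw [specRad_eq_sSup_norm_spectrum, specRad_eq_sSup_norm_spectrum, hσ, ← Set.image_smul,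
    Set.image_image]
  simp [hc]

lemma specRad_eq_of_mul_eq_mul {P M N : Matrix V V ℂ} (hP : IsUnit P) (h : P * M = N * P) :
    specRad M = specRad N := by
  obtain ⟨P, rfl⟩ := hP
  rw [eq_comm, ← Units.eq_mul_inv_iff_mul_eq] at h
  rw [h, coe_units_inv]
  simp only [specRad, charpoly_units_conj]

lemma isHermitian_I_smul_map_ofReal {ι : Type*} {S : Matrix ι ι ℝ} (hS : ∀ i j, S j i = -S i j) :
    (I • S.map ofReal).IsHermitian := by
  ext i j
  simp [hS i j]

lemma IsSkewAdj.I_mul_mul_I_mul_eq_one {ι : Type*} {G : SimpleGraph ι} {S : Matrix ι ι ℝ}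
    (hS : IsSkewAdj G S) {u v : ι} (h : G.Adj u v) :
    I * S u v * (I * S v u) = 1 := by
  rcases hS.2.1 u v h with huv | huv <;>
  · rw [hS.1 u v, huv]
    push_cast
    ring_nf
    simp

section SkewAdjacency

variable {G : SimpleGraph V} {S : Matrix V V ℝ}

lemma diagonal_mul_I_smul_eq_adjMatrix_mul [DecidableRel G.Adj]
    (hS : ∀ i j, ¬ G.Adj i j → S i j = 0) {U : V → ℂ}
    (hU : ∀ u v, G.Adj u v → U v = U u * (I * S u v)) :
    diagonal U * (I • S.map ofReal) = (G.adjMatrix ℝ).map ofReal * diagonal U := by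
  ext i j
  by_cases h : G.Adj i j
  · simp [h, hU i j h, mul_left_comm]
  · simp [h, hS i j h]

theorem IsSkewAdj.specRad_I_smul_eq_adjMatrix [DecidableRel G.Adj] (hT : G.IsTree)
    (hS : IsSkewAdj G S) :
    specRad (I • S.map ofReal) = specRad ((G.adjMatrix ℝ).map ofReal) := by
  obtain ⟨U, hUunit, hU⟩ := hT.exists_potential (fun u v => I * S u v)
    fun _ _ h => hS.I_mul_mul_I_mul_eq_one h
  exact specRad_eq_of_mul_eq_mul (isUnit_diagonal.2 (Pi.isUnit_iff.2 hUunit))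
    (diagonal_mul_I_smul_eq_adjMatrix_mul hS.2.2 hU)

end SkewAdjacency

/-- Every skew-adjacency matrix `S` of a tree `T` becomes, after multiplying by `i`
and conjugating by a `{-1,1}`-diagonal matrix, a Hermitian matrix with the same
spectral radius as the adjacency matrix of `T`; in particular `ρ(S) = ρ(A(T))`. -/
theorem tree_skewAdj_specRad_eq_adj {n : ℕ} (G : SimpleGraph (Fin n))
    [DecidableRel G.Adj] (hT : G.IsTree)
    (S : Matrix (Fin n) (Fin n) ℝ) (hS : IsSkewAdj G S) :
    ∃ D : Fin n → ℂ, (∀ x, D x = 1 ∨ D x = -1) ∧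
      (Matrix.diagonal D * (Complex.I • S.map Complex.ofReal) *
        (Matrix.diagonal D)⁻¹).IsHermitian ∧
      specRad (Matrix.diagonal D * (Complex.I • S.map Complex.ofReal) *
        (Matrix.diagonal D)⁻¹) = specRad ((G.adjMatrix ℝ).map Complex.ofReal) ∧
      specRad (S.map Complex.ofReal) = specRad ((G.adjMatrix ℝ).map Complex.ofReal) := by
  have hA := hS.specRad_I_smul_eq_adjMatrix hT
  refine ⟨1, fun _ => .inl rfl, ?_⟩
  simp only [Pi.one_def, diagonal_one, inv_one, one_mul, mul_one]
  exact ⟨isHermitian_I_smul_map_ofReal hS.1, hA,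
    (specRad_smul_of_norm_eq_one norm_I _).symm.trans hA⟩
end
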